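/- Let X₁ ⊆ ℂ^n and X₂ ⊆ ℂ^m be open sets, and let φ₁ and φ₂ be weights on X₁ and X₂ respectively, each satisfying the evaluation bound. Let {f_i}_{i∈ℕ} be a family in A²(X₁,φ₁) that is orthonormal (⟨f_i,f_j⟩_{X₁,φ₁} = 1 if i = j and 0 otherwise) and complete (every g ∈ A²(X₁,φ₁) with ⟨g,f_i⟩_{X₁,φ₁} = 0 for all i is identically zero), and let {g_j}_{j∈ℕ} be an orthonormal and complete family in A²(X₂,φ₂). Then the family {(z,w) ↦ f_i(z)·g_j(w)}_{i,j∈ℕ} is orthonormal in A²(X₁×X₂, φ₁φ₂) and complete: every h ∈ A²(X₁×X₂, φ₁φ₂) with ∫_{X₁×X₂} h(z,w)·conj(f_i(z)g_j(w))·φ₁(z)φ₂(w) dλ = 0 for all i,j is identically zero. -/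

import Mathlib

open MeasureTheory

noncomputable section

/-- `f` belongs to the weighted Bergman space `A²(X, μ)`: it is holomorphic on `X` and
`|f|² μ` is integrable on `X`. -/
def MemA2 {E : Type*} [NormedAddCommGroup E] [NormedSpace ℂ E] [MeasureSpace E]
    (X : Set E) (μ : E → ℝ) (f : E → ℂ) : Prop :=
  DifferentiableOn ℂ f X ∧ IntegrableOn (fun x => ‖f x‖ ^ 2 * μ x) X volume

/-- The squared norm `‖f‖²_{X,μ} = ∫_X |f|² μ dλ`. -/
def normSqA2 {E : Type*} [NormedAddCommGroup E] [NormedSpace ℂ E] [MeasureSpace E]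
    (X : Set E) (μ : E → ℝ) (f : E → ℂ) : ℝ :=
  ∫ x in X, ‖f x‖ ^ 2 * μ x

/-- The inner product `⟨f,g⟩_{X,μ} = ∫_X f ·conj(g)· μ dλ`. -/
def innerA2 {E : Type*} [NormedAddCommGroup E] [NormedSpace ℂ E] [MeasureSpace E]
    (X : Set E) (μ : E → ℝ) (f g : E → ℂ) : ℂ :=
  ∫ x in X, f x * (starRingEnd ℂ) (g x) * (μ x : ℂ)

/-- `μ` is a weight on `X`: measurable and positive a.e. on `X`. -/
def IsWeight {E : Type*} [NormedAddCommGroup E] [NormedSpace ℂ E] [MeasureSpace E]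
    (X : Set E) (μ : E → ℝ) : Prop :=
  Measurable μ ∧ ∀ᵐ x ∂(volume.restrict X), 0 < μ x

/-- The weight `μ` on `X` satisfies the evaluation bound. -/
def EvalBound {E : Type*} [NormedAddCommGroup E] [NormedSpace ℂ E] [MeasureSpace E]
    (X : Set E) (μ : E → ℝ) : Prop :=
  ∀ K : Set E, K ⊆ X → IsCompact K → ∃ C : ℝ, ∀ f : E → ℂ, MemA2 X μ f →
    ∀ z ∈ K, ‖f z‖ ^ 2 ≤ C * normSqA2 X μ f

/-- The product weight `(φ₁φ₂)(z₁,z₂) = φ₁(z₁)·φ₂(z₂)`. -/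
def prodWeight {F G : Type*} (φ₁ : F → ℝ) (φ₂ : G → ℝ) : F × G → ℝ :=
  fun p => φ₁ p.1 * φ₂ p.2

open Metric Set ComplexConjugate

/-!
Orthonormality is Fubini: the inner product of two products factors. For completeness, let
`h ⊥ f i * g j` for all `i, j` and put `d j z = ⟨h (z, ·), g j⟩`. The evaluation bound on `X₁`
bounds `h (z, w)`, locally uniformly in `z`, by the `A²(X₁, φ₁)`-norm of `h (·, w)`, which is
square integrable in `w`. This dominates the integrand, so `d j` is holomorphic by differentiation
under the integral sign, and Cauchy–Schwarz puts it in `A²(X₁, φ₁)`. By Fubini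
`⟨d j, f i⟩ = ⟨h, f i * g j⟩ = 0`, so `d j = 0` by completeness of `f`. Hence for almost every `z`
the slice `h (z, ·)` is orthogonal to every `g j` and vanishes, and continuity of `h` spreads this
to all of `X₁ × X₂`.
-/

section Holomorphic

variable {E G α : Type*} [NormedAddCommGroup E] [NormedSpace ℂ E]
  [NormedAddCommGroup G] [NormedSpace ℂ G]

theorem norm_sub_le_of_forall_norm_le_on_ball {u : E → G} {c z : E} {R B : ℝ}
    (hd : DifferentiableOn ℂ u (ball c R)) (hB : ∀ z ∈ ball c R, ‖u z‖ ≤ B)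
    (hz : z ∈ ball c R) : ‖u z - u c‖ ≤ 2 * B / R * ‖z - c‖ := by
  have h_maps : MapsTo u (ball c R) (closedBall (u c) (2 * B)) := fun w hw => by
    rw [mem_closedBall, dist_eq_norm, two_mul]
    exact (norm_sub_le _ _).trans (add_le_add (hB w hw) (hB c (mem_ball_self (pos_of_mem_ball hz))))
  simpa [dist_eq_norm] using Complex.dist_le_div_mul_dist_of_mapsTo_ball hd h_maps hz

theorem differentiableAt_integral_of_forall_norm_le_on_ball [MeasurableSpace α] {μ : Measure α}
    {F : E → α → G} {z₀ : E} {r : ℝ} {bound : α → ℝ} (hr : 0 < r)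
    (hF_meas : ∀ z ∈ ball z₀ r, AEStronglyMeasurable (F z) μ)
    (hF'_meas : AEStronglyMeasurable (fun a => fderiv ℂ (F · a) z₀) μ)
    (h_diff : ∀ᵐ a ∂μ, DifferentiableOn ℂ (F · a) (ball z₀ r))
    (h_bound : ∀ᵐ a ∂μ, ∀ z ∈ ball z₀ r, ‖F z a‖ ≤ bound a)
    (bound_integrable : Integrable bound μ) :
    DifferentiableAt ℂ (fun z => ∫ a, F z a ∂μ) z₀ := by
  have hz₀ : z₀ ∈ ball z₀ r := mem_ball_self hr
  have hF_int : Integrable (F z₀) μ :=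
    bound_integrable.mono' (hF_meas z₀ hz₀) (h_bound.mono fun a ha => ha z₀ hz₀)
  have h_lip : ∀ᵐ a ∂μ, ∀ z ∈ ball z₀ r, ‖F z a - F z₀ a‖ ≤ 2 / r * bound a * ‖z - z₀‖ := by
    filter_upwards [h_diff, h_bound] with a had hab z hz
    simpa [mul_div_right_comm] using norm_sub_le_of_forall_norm_le_on_ball had hab hz
  have h_deriv : ∀ᵐ a ∂μ, HasFDerivAt (F · a) (fderiv ℂ (F · a) z₀) z₀ := by
    filter_upwards [h_diff] with a had
    exact (had.differentiableAt (ball_mem_nhds z₀ hr)).hasFDerivAt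
  exact (hasFDerivAt_integral_of_dominated_loc_of_lip' (ball_mem_nhds z₀ hr) hF_meas hF_int
    hF'_meas h_lip (bound_integrable.const_mul _) h_deriv).2.differentiableAt

end Holomorphic

theorem norm_mul_conj_mul_ofReal {a b : ℂ} {t : ℝ} (ht : 0 ≤ t) :
    ‖a * conj b * (t : ℂ)‖ = ‖a‖ * ‖b‖ * t := by
  rw [norm_mul, norm_mul, RCLike.norm_conj, Complex.norm_real, Real.norm_of_nonneg ht]

section BergmanSpace

variable {E : Type*} [NormedAddCommGroup E] [NormedSpace ℂ E] [MeasureSpace E]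
  {X : Set E} {μ : E → ℝ} {f g : E → ℂ}

theorem normSqA2_nonneg (hμ : IsWeight X μ) : 0 ≤ normSqA2 X μ f :=
  integral_nonneg_of_ae (hμ.2.mono fun _ hx => mul_nonneg (sq_nonneg _) hx.le)

variable [OpensMeasurableSpace E]

theorem MemA2.aestronglyMeasurable (hX : MeasurableSet X) (hf : MemA2 X μ f) :
    AEStronglyMeasurable f (volume.restrict X) :=
  hf.1.continuousOn.aestronglyMeasurable hX

theorem integrableOn_innerA2_integrand (hX : MeasurableSet X) (hμ : IsWeight X μ)
    (hf : MemA2 X μ f) (hg : MemA2 X μ g) :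
    IntegrableOn (fun x => f x * conj (g x) * (μ x : ℂ)) X volume := by
  refine Integrable.mono' (hf.2.add hg.2) ?_ ?_
  · exact ((hf.aestronglyMeasurable hX).mul (hg.aestronglyMeasurable hX).star).mul
      (Complex.measurable_ofReal.comp hμ.1).aestronglyMeasurable
  · filter_upwards [hμ.2] with x hx
    simp only [Pi.add_apply]
    rw [norm_mul_conj_mul_ofReal hx.le, ← add_mul]
    gcongr
    nlinarith [sq_nonneg (‖f x‖ - ‖g x‖)]

theorem norm_innerA2_sq_le (hX : MeasurableSet X) (hμ : IsWeight X μ)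
    (hf : MemA2 X μ f) (hg : MemA2 X μ g) :
    ‖innerA2 X μ f g‖ ^ 2 ≤ normSqA2 X μ f * normSqA2 X μ g := by
  have hsq : ∀ u : E → ℂ, (fun x => (‖u x‖ * √(μ x)) ^ 2) =ᵐ[volume.restrict X]
      fun x => ‖u x‖ ^ 2 * μ x := by
    intro u
    filter_upwards [hμ.2] with x hx
    rw [mul_pow, Real.sq_sqrt hx.le]
  have hL2 : ∀ u, MemA2 X μ u → MemLp (fun x => ‖u x‖ * √(μ x)) (ENNReal.ofReal 2)
      (volume.restrict X) := by
    intro u hu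
    rw [ENNReal.ofReal_ofNat, memLp_two_iff_integrable_sq]
    · exact hu.2.congr (hsq u).symm
    · exact (hu.aestronglyMeasurable hX).norm.mul
        (Real.continuous_sqrt.measurable.comp hμ.1).aestronglyMeasurable
  have hnormSq : ∀ u : E → ℂ, ∫ x in X, (‖u x‖ * √(μ x)) ^ (2 : ℝ) = normSqA2 X μ u := by
    intro u
    simp_rw [Real.rpow_two]
    exact integral_congr_ae (hsq u)
  have hHolder := integral_mul_le_Lp_mul_Lq_of_nonneg Real.HolderConjugate.two_two
    (ae_of_all _ fun x => by positivity) (ae_of_all _ fun x => by positivity) (hL2 f hf) (hL2 g hg)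
  rw [hnormSq, hnormSq, ← Real.sqrt_eq_rpow, ← Real.sqrt_eq_rpow] at hHolder
  have hle : ‖innerA2 X μ f g‖ ≤ √(normSqA2 X μ f) * √(normSqA2 X μ g) := by
    refine (norm_integral_le_integral_norm _).trans (le_of_eq_of_le (integral_congr_ae ?_) hHolder)
    filter_upwards [hμ.2] with x hx
    rw [norm_mul_conj_mul_ofReal hx.le, mul_mul_mul_comm, Real.mul_self_sqrt hx.le]
  calc ‖innerA2 X μ f g‖ ^ 2 ≤ (√(normSqA2 X μ f) * √(normSqA2 X μ g)) ^ 2 := by gcongr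
    _ = normSqA2 X μ f * normSqA2 X μ g := by
      rw [mul_pow, Real.sq_sqrt (normSqA2_nonneg hμ), Real.sq_sqrt (normSqA2_nonneg hμ)]

end BergmanSpace

theorem volume_restrict_prod {E₁ E₂ : Type*} [MeasureSpace E₁] [MeasureSpace E₂]
    [SFinite (volume : Measure E₁)] [SFinite (volume : Measure E₂)] (X₁ : Set E₁) (X₂ : Set E₂) :
    (volume : Measure (E₁ × E₂)).restrict (X₁ ×ˢ X₂)
      = (volume.restrict X₁).prod (volume.restrict X₂) := by
  rw [Measure.volume_eq_prod, Measure.prod_restrict]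

section Product

variable {E₁ E₂ : Type*} [NormedAddCommGroup E₁] [NormedSpace ℂ E₁] [MeasureSpace E₁]
  [NormedAddCommGroup E₂] [NormedSpace ℂ E₂] [MeasureSpace E₂]
  [SFinite (volume : Measure E₁)] [SFinite (volume : Measure E₂)]
  {X₁ : Set E₁} {X₂ : Set E₂} {φ₁ : E₁ → ℝ} {φ₂ : E₂ → ℝ}

theorem IsWeight.prod (hw₁ : IsWeight X₁ φ₁) (hw₂ : IsWeight X₂ φ₂) :
    IsWeight (X₁ ×ˢ X₂) (prodWeight φ₁ φ₂) := by
  refine ⟨(hw₁.1.comp measurable_fst).mul (hw₂.1.comp measurable_snd), ?_⟩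
  rw [volume_restrict_prod]
  filter_upwards [Measure.quasiMeasurePreserving_fst.ae hw₁.2,
    Measure.quasiMeasurePreserving_snd.ae hw₂.2] with p h₁ h₂
  exact mul_pos h₁ h₂

theorem MemA2.mul_prod {u : E₁ → ℂ} {v : E₂ → ℂ} (hu : MemA2 X₁ φ₁ u) (hv : MemA2 X₂ φ₂ v) :
    MemA2 (X₁ ×ˢ X₂) (prodWeight φ₁ φ₂) (fun p => u p.1 * v p.2) := by
  refine ⟨(hu.1.comp differentiableOn_fst fun p hp => hp.1).mul
    (hv.1.comp differentiableOn_snd fun p hp => hp.2), ?_⟩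
  rw [IntegrableOn, volume_restrict_prod]
  refine (hu.2.mul_prod hv.2).congr (ae_of_all _ fun p => ?_)
  simp only [prodWeight, norm_mul, mul_pow]
  ring

theorem innerA2_mul_prod (u₁ u₂ : E₁ → ℂ) (v₁ v₂ : E₂ → ℂ) :
    innerA2 (X₁ ×ˢ X₂) (prodWeight φ₁ φ₂) (fun p => u₁ p.1 * v₁ p.2) (fun p => u₂ p.1 * v₂ p.2)
      = innerA2 X₁ φ₁ u₁ u₂ * innerA2 X₂ φ₂ v₁ v₂ := by
  rw [innerA2, innerA2, innerA2, volume_restrict_prod, ← integral_prod_mul]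
  congr 1 with p
  simp only [prodWeight, map_mul, Complex.ofReal_mul]
  ring

variable {h : E₁ × E₂ → ℂ}

theorem MemA2.integrable_normSqA2_prod_right (hh : MemA2 (X₁ ×ˢ X₂) (prodWeight φ₁ φ₂) h) :
    Integrable (fun z => normSqA2 X₂ φ₂ (fun w => h (z, w)) * φ₁ z) (volume.restrict X₁) := by
  have hint := hh.2
  rw [IntegrableOn, volume_restrict_prod] at hint
  refine hint.integral_prod_left.congr (ae_of_all _ fun z => ?_)
  dsimp only
  rw [normSqA2, ← integral_mul_const]
  congr 1 with w
  simp only [prodWeight]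
  ring

theorem MemA2.integrable_normSqA2_prod_left (hh : MemA2 (X₁ ×ˢ X₂) (prodWeight φ₁ φ₂) h) :
    Integrable (fun w => normSqA2 X₁ φ₁ (fun z => h (z, w)) * φ₂ w) (volume.restrict X₂) := by
  have hint := hh.2
  rw [IntegrableOn, volume_restrict_prod] at hint
  refine hint.integral_prod_right.congr (ae_of_all _ fun w => ?_)
  dsimp only
  rw [normSqA2, ← integral_mul_const]
  congr 1 with z
  simp only [prodWeight]
  ring

theorem MemA2.ae_memA2_prod_right (hX₁ : MeasurableSet X₁)
    (hφ₁ : ∀ᵐ z ∂(volume.restrict X₁), 0 < φ₁ z)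
    (hh : MemA2 (X₁ ×ˢ X₂) (prodWeight φ₁ φ₂) h) :
    ∀ᵐ z ∂(volume.restrict X₁), MemA2 X₂ φ₂ (fun w => h (z, w)) := by
  have hint := hh.2
  rw [IntegrableOn, volume_restrict_prod] at hint
  filter_upwards [hint.prod_right_ae, ae_restrict_mem hX₁, hφ₁] with z hz hzX hpos
  refine ⟨hh.1.comp (differentiableOn_const z |>.prodMk differentiableOn_id)
    fun w hw => ⟨hzX, hw⟩, ?_⟩
  refine (hz.const_mul (φ₁ z)⁻¹).congr (ae_of_all _ fun w => ?_)
  simp only [prodWeight]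
  field_simp

theorem MemA2.ae_memA2_prod_left (hX₂ : MeasurableSet X₂)
    (hφ₂ : ∀ᵐ w ∂(volume.restrict X₂), 0 < φ₂ w)
    (hh : MemA2 (X₁ ×ˢ X₂) (prodWeight φ₁ φ₂) h) :
    ∀ᵐ w ∂(volume.restrict X₂), MemA2 X₁ φ₁ (fun z => h (z, w)) := by
  have hint := hh.2
  rw [IntegrableOn, volume_restrict_prod] at hint
  filter_upwards [hint.prod_left_ae, ae_restrict_mem hX₂, hφ₂] with w hw hwX hpos
  refine ⟨hh.1.comp (differentiableOn_id.prodMk (differentiableOn_const w))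
    fun z hz => ⟨hz, hwX⟩, ?_⟩
  refine (hw.const_mul (φ₂ w)⁻¹).congr (ae_of_all _ fun z => ?_)
  simp only [prodWeight]
  field_simp

variable [OpensMeasurableSpace (E₁ × E₂)] {u : E₁ → ℂ} {v : E₂ → ℂ}

theorem innerA2_prod_eq_innerA2_innerA2 (hX₁ : MeasurableSet X₁) (hX₂ : MeasurableSet X₂)
    (hw₁ : IsWeight X₁ φ₁) (hw₂ : IsWeight X₂ φ₂) (hh : MemA2 (X₁ ×ˢ X₂) (prodWeight φ₁ φ₂) h)
    (hu : MemA2 X₁ φ₁ u) (hv : MemA2 X₂ φ₂ v) :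
    innerA2 (X₁ ×ˢ X₂) (prodWeight φ₁ φ₂) h (fun p => u p.1 * v p.2)
      = innerA2 X₁ φ₁ (fun z => innerA2 X₂ φ₂ (fun w => h (z, w)) v) u := by
  have hint := integrableOn_innerA2_integrand (hX₁.prod hX₂) (hw₁.prod hw₂) hh (hu.mul_prod hv)
  rw [IntegrableOn, volume_restrict_prod] at hint
  rw [innerA2, volume_restrict_prod, integral_prod _ hint, innerA2]
  refine integral_congr_ae (ae_of_all _ fun z => ?_)
  dsimp only
  rw [innerA2, ← integral_mul_const, ← integral_mul_const]
  refine integral_congr_ae (ae_of_all _ fun w => ?_)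
  simp only [prodWeight, map_mul, Complex.ofReal_mul]
  ring

variable [FiniteDimensional ℂ E₁] [OpensMeasurableSpace E₂]

theorem differentiableOn_innerA2_prod_right (hX₁ : IsOpen X₁) (hX₂ : IsOpen X₂)
    (hw₂ : IsWeight X₂ φ₂) (he₁ : EvalBound X₁ φ₁)
    (hh : MemA2 (X₁ ×ˢ X₂) (prodWeight φ₁ φ₂) h) (hv : MemA2 X₂ φ₂ v) :
    DifferentiableOn ℂ (fun z => innerA2 X₂ φ₂ (fun w => h (z, w)) v) X₁ := by
  intro z₀ hz₀
  obtain ⟨r, hr, hrX⟩ := nhds_basis_closedBall.mem_iff.1 (hX₁.mem_nhds hz₀)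
  obtain ⟨C, hC⟩ := he₁ _ hrX (isCompact_closedBall z₀ r)
  have hballX : ball z₀ r ⊆ X₁ := ball_subset_closedBall.trans hrX
  have hvφ : AEStronglyMeasurable (fun w => conj (v w) * (φ₂ w : ℂ)) (volume.restrict X₂) :=
    (hv.aestronglyMeasurable hX₂.measurableSet).star.mul
      (Complex.measurable_ofReal.comp hw₂.1).aestronglyMeasurable
  have hF_meas : ∀ z ∈ ball z₀ r, AEStronglyMeasurable
      (fun w => h (z, w) * conj (v w) * (φ₂ w : ℂ)) (volume.restrict X₂) := fun z hz => by
    simp_rw [mul_assoc]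
    exact ((hh.1.continuousOn.comp (Continuous.continuousOn (by fun_prop)) fun w hw =>
      ⟨hballX hz, hw⟩).aestronglyMeasurable hX₂.measurableSet).mul hvφ
  have hF'_meas : AEStronglyMeasurable
      (fun w => fderiv ℂ (fun z => h (z, w) * conj (v w) * (φ₂ w : ℂ)) z₀)
      (volume.restrict X₂) := by
    -- `measurable_fderiv` needs no regularity of `h`: read the partial derivative off `fderiv h`.
    have hL : Measurable fun w => (fderiv ℂ h (z₀, w)).comp (ContinuousLinearMap.inl ℂ E₁ E₂) :=
      (ContinuousLinearMap.precomp ℂ _).continuous.measurable.comp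
        ((measurable_fderiv ℂ h).comp measurable_prodMk_left)
    refine (hvφ.smul hL.aestronglyMeasurable).congr ?_
    filter_upwards [ae_restrict_mem hX₂.measurableSet] with w hw
    have hdiff : DifferentiableAt ℂ h (z₀, w) :=
      hh.1.differentiableAt ((hX₁.prod hX₂).mem_nhds ⟨hz₀, hw⟩)
    rw [((hdiff.hasFDerivAt.comp z₀ (hasFDerivAt_prodMk_left z₀ w)).mul_const _).mul_const _
      |>.fderiv, smul_smul, mul_comm]
    rfl
  have h_diff : ∀ᵐ w ∂(volume.restrict X₂),
      DifferentiableOn ℂ (fun z => h (z, w) * conj (v w) * (φ₂ w : ℂ)) (ball z₀ r) := by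
    filter_upwards [ae_restrict_mem hX₂.measurableSet] with w hw
    exact ((hh.1.comp (differentiableOn_id.prodMk (differentiableOn_const w))
      fun z hz => ⟨hballX hz, hw⟩).mul_const _).mul_const _
  have h_bound : ∀ᵐ w ∂(volume.restrict X₂), ∀ z ∈ ball z₀ r,
      ‖h (z, w) * conj (v w) * (φ₂ w : ℂ)‖
        ≤ C * (normSqA2 X₁ φ₁ (fun z => h (z, w)) * φ₂ w) + ‖v w‖ ^ 2 * φ₂ w := by
    filter_upwards [hh.ae_memA2_prod_left hX₂.measurableSet hw₂.2, hw₂.2] with w hw hpos z hz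
    have hCz := hC _ hw z (ball_subset_closedBall hz)
    rw [norm_mul_conj_mul_ofReal hpos.le, ← mul_assoc, ← add_mul]
    gcongr
    nlinarith [sq_nonneg (‖h (z, w)‖ - ‖v w‖)]
  exact (differentiableAt_integral_of_forall_norm_le_on_ball hr hF_meas hF'_meas h_diff h_bound
    ((hh.integrable_normSqA2_prod_left.const_mul C).add hv.2)).differentiableWithinAt

variable [OpensMeasurableSpace E₁]

theorem memA2_innerA2_prod_right (hX₁ : IsOpen X₁) (hX₂ : IsOpen X₂)
    (hw₁ : IsWeight X₁ φ₁) (hw₂ : IsWeight X₂ φ₂) (he₁ : EvalBound X₁ φ₁)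
    (hh : MemA2 (X₁ ×ˢ X₂) (prodWeight φ₁ φ₂) h) (hv : MemA2 X₂ φ₂ v) :
    MemA2 X₁ φ₁ (fun z => innerA2 X₂ φ₂ (fun w => h (z, w)) v) := by
  have hd := differentiableOn_innerA2_prod_right hX₁ hX₂ hw₂ he₁ hh hv
  refine ⟨hd, Integrable.mono' (hh.integrable_normSqA2_prod_right.mul_const (normSqA2 X₂ φ₂ v))
    ?_ ?_⟩
  · exact ((hd.continuousOn.aestronglyMeasurable hX₁.measurableSet).norm.pow 2).mul
      hw₁.1.aestronglyMeasurable
  · filter_upwards [hh.ae_memA2_prod_right hX₁.measurableSet hw₁.2, hw₁.2] with z hz hpos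
    rw [Real.norm_of_nonneg (by positivity), mul_right_comm]
    gcongr
    exact norm_innerA2_sq_le hX₂.measurableSet hw₂ hz hv

end Product

theorem ContinuousOn.eqOn_zero_prod_of_ae {α β γ : Type*} [TopologicalSpace α] [MeasurableSpace α]
    [TopologicalSpace β] [TopologicalSpace γ] [Zero γ] [T2Space γ] {μ : Measure α}
    [μ.IsOpenPosMeasure] {U : Set α} {V : Set β} {h : α × β → γ} (hh : ContinuousOn h (U ×ˢ V))
    (hU : IsOpen U) (h0 : ∀ᵐ z ∂μ.restrict U, ∀ w ∈ V, h (z, w) = 0) : EqOn h 0 (U ×ˢ V) := by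
  rintro ⟨z, w⟩ ⟨hz, hw⟩
  exact Measure.eqOn_open_of_ae_eq (h0.mono fun z hz => hz w hw) hU
    (hh.comp (Continuous.continuousOn (by fun_prop)) fun z hz => ⟨hz, hw⟩) continuousOn_const hz

theorem product_complete_orthonormal_basis_general {n m : ℕ}
    (X₁ : Set (Fin n → ℂ)) (X₂ : Set (Fin m → ℂ))
    (hX₁ : IsOpen X₁) (hX₂ : IsOpen X₂)
    (φ₁ : (Fin n → ℂ) → ℝ) (φ₂ : (Fin m → ℂ) → ℝ)
    (hw₁ : IsWeight X₁ φ₁) (hw₂ : IsWeight X₂ φ₂)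
    (he₁ : EvalBound X₁ φ₁)
    (f : ℕ → (Fin n → ℂ) → ℂ) (g : ℕ → (Fin m → ℂ) → ℂ)
    (hfmem : ∀ i, MemA2 X₁ φ₁ (f i))
    (hfon : ∀ i j, innerA2 X₁ φ₁ (f i) (f j) = if i = j then 1 else 0)
    (hfcomp : ∀ h : (Fin n → ℂ) → ℂ, MemA2 X₁ φ₁ h →
      (∀ i, innerA2 X₁ φ₁ h (f i) = 0) → ∀ z ∈ X₁, h z = 0)
    (hgmem : ∀ j, MemA2 X₂ φ₂ (g j))
    (hgon : ∀ i j, innerA2 X₂ φ₂ (g i) (g j) = if i = j then 1 else 0)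
    (hgcomp : ∀ h : (Fin m → ℂ) → ℂ, MemA2 X₂ φ₂ h →
      (∀ j, innerA2 X₂ φ₂ h (g j) = 0) → ∀ w ∈ X₂, h w = 0) :
    (∀ i j, MemA2 (X₁ ×ˢ X₂) (prodWeight φ₁ φ₂) (fun p => f i p.1 * g j p.2)) ∧
    (∀ i j i' j', innerA2 (X₁ ×ˢ X₂) (prodWeight φ₁ φ₂)
        (fun p => f i p.1 * g j p.2) (fun p => f i' p.1 * g j' p.2)
      = if i = i' ∧ j = j' then 1 else 0) ∧
    (∀ h : (Fin n → ℂ) × (Fin m → ℂ) → ℂ, MemA2 (X₁ ×ˢ X₂) (prodWeight φ₁ φ₂) h →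
      (∀ i j, innerA2 (X₁ ×ˢ X₂) (prodWeight φ₁ φ₂) h (fun p => f i p.1 * g j p.2) = 0) →
      ∀ p ∈ X₁ ×ˢ X₂, h p = 0) := by
  refine ⟨fun i j => (hfmem i).mul_prod (hgmem j), fun i j i' j' => ?_, fun h hh horth => ?_⟩
  · rw [innerA2_mul_prod, hfon, hgon, ite_zero_mul_ite_zero, mul_one]
  have hd_zero : ∀ j, ∀ z ∈ X₁, innerA2 X₂ φ₂ (fun w => h (z, w)) (g j) = 0 := fun j =>
    hfcomp _ (memA2_innerA2_prod_right hX₁ hX₂ hw₁ hw₂ he₁ hh (hgmem j)) fun i => by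
      rw [← innerA2_prod_eq_innerA2_innerA2 hX₁.measurableSet hX₂.measurableSet hw₁ hw₂ hh
        (hfmem i) (hgmem j), horth]
  refine hh.1.continuousOn.eqOn_zero_prod_of_ae (μ := volume) hX₁ ?_
  filter_upwards [hh.ae_memA2_prod_right hX₁.measurableSet hw₁.2,
    ae_restrict_mem hX₁.measurableSet] with z hz hzX
  exact hgcomp _ hz fun j => hd_zero j z hzX

/-- the products of complete orthonormal bases of `A²(X₁,φ₁)` and `A²(X₂,φ₂)`
form a complete orthonormal family in `A²(X₁×X₂, φ₁φ₂)`. -/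
theorem product_complete_orthonormal_basis {n m : ℕ}
    (X₁ : Set (Fin n → ℂ)) (X₂ : Set (Fin m → ℂ))
    (hX₁ : IsOpen X₁) (hX₂ : IsOpen X₂)
    (φ₁ : (Fin n → ℂ) → ℝ) (φ₂ : (Fin m → ℂ) → ℝ)
    (hw₁ : IsWeight X₁ φ₁) (hw₂ : IsWeight X₂ φ₂)
    (he₁ : EvalBound X₁ φ₁) (he₂ : EvalBound X₂ φ₂)
    (f : ℕ → (Fin n → ℂ) → ℂ) (g : ℕ → (Fin m → ℂ) → ℂ)
    (hfmem : ∀ i, MemA2 X₁ φ₁ (f i))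
    (hfon : ∀ i j, innerA2 X₁ φ₁ (f i) (f j) = if i = j then 1 else 0)
    (hfcomp : ∀ h : (Fin n → ℂ) → ℂ, MemA2 X₁ φ₁ h →
      (∀ i, innerA2 X₁ φ₁ h (f i) = 0) → ∀ z ∈ X₁, h z = 0)
    (hgmem : ∀ j, MemA2 X₂ φ₂ (g j))
    (hgon : ∀ i j, innerA2 X₂ φ₂ (g i) (g j) = if i = j then 1 else 0)
    (hgcomp : ∀ h : (Fin m → ℂ) → ℂ, MemA2 X₂ φ₂ h →
      (∀ j, innerA2 X₂ φ₂ h (g j) = 0) → ∀ w ∈ X₂, h w = 0) :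
    (∀ i j, MemA2 (X₁ ×ˢ X₂) (prodWeight φ₁ φ₂) (fun p => f i p.1 * g j p.2)) ∧
    (∀ i j i' j', innerA2 (X₁ ×ˢ X₂) (prodWeight φ₁ φ₂)
        (fun p => f i p.1 * g j p.2) (fun p => f i' p.1 * g j' p.2)
      = if i = i' ∧ j = j' then 1 else 0) ∧
    (∀ h : (Fin n → ℂ) × (Fin m → ℂ) → ℂ, MemA2 (X₁ ×ˢ X₂) (prodWeight φ₁ φ₂) h →
      (∀ i j, innerA2 (X₁ ×ˢ X₂) (prodWeight φ₁ φ₂) h (fun p => f i p.1 * g j p.2) = 0) →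
      ∀ p ∈ X₁ ×ˢ X₂, h p = 0) :=
  product_complete_orthonormal_basis_general X₁ X₂ hX₁ hX₂ φ₁ φ₂ hw₁ hw₂ he₁ f g hfmem hfon hfcomp
    hgmem hgon hgcomp
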